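/- The composed map A ↦ D(Â) = conj(Â) ⊗ Â, from the additive group of N×N symmetric ℤ₂-matrices to unitaries, is a group homomorphism with trivial kernel: D(Â) = I ⊗ I if and only if A is the zero matrix. Consequently, distinct adjacency matrices yield physically distinguishable representations. -/

import Mathlib

open Matrix Kronecker

/-- Vertices of a graph with N = 2^k nodes, encoded as bitstrings of k qubits. -/
abbrev Vtx (k : ℕ) := Fin k → Fin 2

/-- The 2×2 Hadamard matrix. -/
noncomputable def H2 : Matrix (Fin 2) (Fin 2) ℂ :=
  ((Real.sqrt 2 : ℂ))⁻¹ • !![1, 1; 1, -1]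

/-- h(A) = iπ·∑_{i,j} A_{ij} |i,j⟩⟨i,j|. -/
noncomputable def hmat {k : ℕ} (A : Matrix (Vtx k) (Vtx k) (ZMod 2)) :
    Matrix (Vtx k × Vtx k) (Vtx k × Vtx k) ℂ :=
  Matrix.diagonal fun p => Complex.I * (Real.pi : ℂ) * ((A p.1 p.2).val : ℂ)

/-- cexp(K) = I ⊕ exp(K) = |0⟩⟨0|⊗I + |1⟩⟨1|⊗exp(K). -/
noncomputable def cexpM {k : ℕ} (K : Matrix (Vtx k × Vtx k) (Vtx k × Vtx k) ℂ) :
    Matrix (Fin 2 × (Vtx k × Vtx k)) (Fin 2 × (Vtx k × Vtx k)) ℂ :=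
  (Matrix.single 0 0 1) ⊗ₖ (1 : Matrix (Vtx k × Vtx k) (Vtx k × Vtx k) ℂ)
    + (Matrix.single 1 1 1) ⊗ₖ NormedSpace.exp K

/-- The Hadamard transform H^{⊗(2k+1)} on the (2k+1)-qubit space
ℂ² ⊗ (ℂ^{2^k} ⊗ ℂ^{2^k}), given by its entrywise tensor-power formula. -/
noncomputable def Hfull (k : ℕ) :
    Matrix (Fin 2 × (Vtx k × Vtx k)) (Fin 2 × (Vtx k × Vtx k)) ℂ :=
  Matrix.of fun p q =>
    H2 p.1 q.1 * (∏ t, H2 (p.2.1 t) (q.2.1 t)) * ∏ t, H2 (p.2.2 t) (q.2.2 t)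

/-- The log-Hadamard representation Â = H^{⊗(2k+1)}·cexp(h(A))·H^{⊗(2k+1)}. -/
noncomputable def hatRep {k : ℕ} (A : Matrix (Vtx k) (Vtx k) (ZMod 2)) :
    Matrix (Fin 2 × (Vtx k × Vtx k)) (Fin 2 × (Vtx k × Vtx k)) ℂ :=
  Hfull k * cexpM (hmat A) * Hfull k

/-- The doubling D(f) := conj(f) ⊗ f. -/
noncomputable def Dbl {n : Type*} [Fintype n] (f : Matrix n n ℂ) :
    Matrix (n × n) (n × n) ℂ :=
  (f.map (starRingEnd ℂ)) ⊗ₖ f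

/-!
Â is the conjugate of the diagonal ±1 matrix cexp(h(A)) by the involution H^{⊗(2k+1)}, and the
diagonal entries of cexp(h(A)) are 1 on the control-|0⟩ block and (-1)^{A_ij} on the control-|1⟩
block. Hence A ↦ cexp(h(A)), and with it A ↦ Â and A ↦ D(Â), turns addition mod 2 into matrix
multiplication. For the kernel: the entries conj(f_pq) f_rs = δ_pq δ_rs of conj(f) ⊗ f = I ⊗ I
force f = c • I; then cexp(h(A)) = c • I as well, the control-|0⟩ block gives c = 1, and the
control-|1⟩ block gives A = 0.
-/

section Doubling

variable {n : Type*} [Fintype n]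

lemma Dbl_mul (f g : Matrix n n ℂ) : Dbl (f * g) = Dbl f * Dbl g := by
  rw [Dbl, Dbl, Dbl, Matrix.map_mul, ← Matrix.mul_kronecker_mul]

lemma Dbl_one [DecidableEq n] : Dbl (1 : Matrix n n ℂ) = 1 ⊗ₖ 1 := by
  rw [Dbl, Matrix.map_one _ (map_zero _) (map_one _)]

lemma exists_eq_smul_one_of_Dbl_eq_one [DecidableEq n] [Nonempty n] {f : Matrix n n ℂ}
    (h : Dbl f = 1 ⊗ₖ 1) : ∃ c : ℂ, f = c • 1 := by
  have hentry (p q r s : n) :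
      starRingEnd ℂ (f p q) * f r s = (1 : Matrix n n ℂ) p q * (1 : Matrix n n ℂ) r s := by
    simpa [Dbl] using congrFun₂ h (p, r) (q, s)
  obtain ⟨p⟩ := ‹Nonempty n›
  have hc : starRingEnd ℂ (f p p) ≠ 0 := by
    intro h0
    simpa [h0] using hentry p p p p
  refine ⟨(starRingEnd ℂ (f p p))⁻¹, Matrix.ext fun r s => ?_⟩
  rw [Matrix.smul_apply, smul_eq_mul, eq_inv_mul_iff_mul_eq₀ hc, hentry, one_apply_eq, one_mul]

end Doubling

lemma mul_mul_mul_of_mul_self_eq_one {M : Type*} [Monoid M] {h : M} (hh : h * h = 1) (a b : M) :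
    h * (a * b) * h = h * a * h * (h * b * h) := by
  rw [show h * a * h * (h * b * h) = h * a * (h * h) * b * h by simp only [mul_assoc], hh, mul_one]
  simp only [mul_assoc]

section PiTensor

variable {ι m R : Type*} [Fintype ι] [CommSemiring R]

/-- The tensor power `M^{⊗ι}`, in the product basis of `(R^m)^{⊗ι}` indexed by `ι → m`. -/
def piTensor (M : Matrix m m R) : Matrix (ι → m) (ι → m) R :=
  Matrix.of fun a b => ∏ t, M (a t) (b t)

lemma piTensor_mul [DecidableEq ι] [Fintype m] (M N : Matrix m m R) :
    (piTensor M * piTensor N : Matrix (ι → m) (ι → m) R) = piTensor (M * N) := by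
  ext a b
  simp only [piTensor, mul_apply, of_apply, ← Finset.prod_mul_distrib, Fintype.prod_sum]

lemma piTensor_one [DecidableEq m] :
    (piTensor (1 : Matrix m m R) : Matrix (ι → m) (ι → m) R) = 1 := by
  ext a b
  simp only [piTensor, of_apply, one_apply, Finset.prod_boole, Finset.mem_univ, true_implies,
    funext_iff]

end PiTensor

lemma H2_mul_self : H2 * H2 = 1 := by
  have h : ((Real.sqrt 2 : ℂ))⁻¹ * ((Real.sqrt 2 : ℂ))⁻¹ = 2⁻¹ := by
    rw [← mul_inv, ← Complex.ofReal_mul, Real.mul_self_sqrt (by norm_num)]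
    norm_num
  rw [H2, smul_mul_smul_comm, h, Matrix.mul_fin_two]
  norm_num
  exact Matrix.one_fin_two.symm

lemma Hfull_eq_kronecker (k : ℕ) : Hfull k = H2 ⊗ₖ (piTensor H2 ⊗ₖ piTensor H2) := by
  ext ⟨i, a, b⟩ ⟨j, c, d⟩
  simp [Hfull, piTensor, mul_assoc]

lemma Hfull_mul_self (k : ℕ) : Hfull k * Hfull k = 1 := by
  rw [Hfull_eq_kronecker, ← mul_kronecker_mul, ← mul_kronecker_mul, piTensor_mul, H2_mul_self,
    piTensor_one, one_kronecker_one, one_kronecker_one]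

lemma neg_one_pow_val_add (a b : ZMod 2) :
    (-1 : ℂ) ^ (a + b).val = (-1 : ℂ) ^ a.val * (-1 : ℂ) ^ b.val := by
  rw [ZMod.val_add, ← neg_one_pow_eq_pow_mod_two, pow_add]

lemma neg_one_pow_val_eq_one_iff (a : ZMod 2) : (-1 : ℂ) ^ a.val = 1 ↔ a = 0 := by
  obtain rfl | rfl : a = 0 ∨ a = 1 := by revert a; decide
  · simp
  · norm_num [ZMod.val_one]

lemma exp_I_mul_pi_mul_natCast (m : ℕ) :
    Complex.exp (Complex.I * Real.pi * m) = (-1) ^ m := by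
  rw [mul_comm, Complex.exp_nat_mul, mul_comm, Complex.exp_pi_mul_I]

lemma single_kronecker_one_add_single_kronecker_diagonal {p R : Type*} [Fintype p]
    [DecidableEq p] [Semiring R] (d : p → R) :
    single (0 : Fin 2) 0 (1 : R) ⊗ₖ (1 : Matrix p p R) + single 1 1 1 ⊗ₖ diagonal d =
      diagonal fun q => if q.1 = 0 then 1 else d q.2 := by
  rw [← diagonal_single, ← diagonal_single, ← diagonal_one, diagonal_kronecker_diagonal,
    diagonal_kronecker_diagonal, diagonal_add]
  congr 1
  funext ⟨i, q⟩
  fin_cases i <;> simp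

noncomputable def controlledSign {k : ℕ} (A : Matrix (Vtx k) (Vtx k) (ZMod 2)) :
    Fin 2 × (Vtx k × Vtx k) → ℂ :=
  fun q => if q.1 = 0 then 1 else (-1 : ℂ) ^ (A q.2.1 q.2.2).val

section Representation

variable {k : ℕ}

lemma cexpM_hmat (A : Matrix (Vtx k) (Vtx k) (ZMod 2)) :
    cexpM (hmat A) = diagonal (controlledSign A) := by
  have hexp : NormedSpace.exp (hmat A) = diagonal fun p => (-1 : ℂ) ^ (A p.1 p.2).val := by
    rw [hmat, exp_diagonal, Pi.exp_def, ← Complex.exp_eq_exp_ℂ]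
    simp only [exp_I_mul_pi_mul_natCast]
  rw [cexpM, hexp, single_kronecker_one_add_single_kronecker_diagonal]
  rfl

lemma controlledSign_add (A B : Matrix (Vtx k) (Vtx k) (ZMod 2)) :
    controlledSign (A + B) = controlledSign A * controlledSign B := by
  funext q
  by_cases h : q.1 = 0 <;> simp [controlledSign, h, neg_one_pow_val_add]

lemma controlledSign_eq_one_iff (A : Matrix (Vtx k) (Vtx k) (ZMod 2)) :
    controlledSign A = 1 ↔ A = 0 := by
  constructor
  · intro h
    ext i j
    simpa [controlledSign, neg_one_pow_val_eq_one_iff] using congrFun h (1, i, j)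
  · rintro rfl
    funext q
    simp [controlledSign]

lemma hatRep_add (A B : Matrix (Vtx k) (Vtx k) (ZMod 2)) :
    hatRep (A + B) = hatRep A * hatRep B := by
  rw [hatRep, hatRep, hatRep, cexpM_hmat, cexpM_hmat, cexpM_hmat, controlledSign_add,
    ← mul_mul_mul_of_mul_self_eq_one (Hfull_mul_self k), diagonal_mul_diagonal']
  rfl

lemma hatRep_zero : hatRep (0 : Matrix (Vtx k) (Vtx k) (ZMod 2)) = 1 := by
  rw [hatRep, cexpM_hmat, diagonal_eq_one.mpr ((controlledSign_eq_one_iff 0).mpr rfl), mul_one,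
    Hfull_mul_self]

lemma eq_zero_of_hatRep_eq_smul_one {A : Matrix (Vtx k) (Vtx k) (ZMod 2)} {c : ℂ}
    (h : hatRep A = c • 1) : A = 0 := by
  have hdiag : diagonal (controlledSign A) = c • 1 := by
    calc diagonal (controlledSign A)
        = Hfull k * Hfull k * diagonal (controlledSign A) * (Hfull k * Hfull k) := by
          rw [Hfull_mul_self, one_mul, mul_one]
      _ = Hfull k * hatRep A * Hfull k := by rw [hatRep, cexpM_hmat]; simp only [mul_assoc]
      _ = c • 1 := by rw [h, Matrix.mul_smul, mul_one, Matrix.smul_mul, Hfull_mul_self]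
  have hc : c = 1 := by
    simpa [controlledSign] using (congrFun₂ hdiag (0, 0, 0) (0, 0, 0)).symm
  rwa [hc, one_smul, diagonal_eq_one, controlledSign_eq_one_iff] at hdiag

end Representation

/-- The map A ↦ D(Â) is a group homomorphism from the additive group of symmetric
ℤ₂-matrices to unitaries, with trivial kernel: D(Â) = I ⊗ I ↔ A = 0. -/
theorem stmt_12 {k : ℕ} :
    (∀ A B : Matrix (Vtx k) (Vtx k) (ZMod 2), A.IsSymm → B.IsSymm →
      Dbl (hatRep (A + B)) = Dbl (hatRep A) * Dbl (hatRep B)) ∧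
    (∀ A : Matrix (Vtx k) (Vtx k) (ZMod 2), A.IsSymm →
      (Dbl (hatRep A) =
          (1 : Matrix (Fin 2 × (Vtx k × Vtx k)) (Fin 2 × (Vtx k × Vtx k)) ℂ) ⊗ₖ
            (1 : Matrix (Fin 2 × (Vtx k × Vtx k)) (Fin 2 × (Vtx k × Vtx k)) ℂ) ↔
        A = 0)) := by
  refine ⟨fun A B _ _ => by rw [hatRep_add, Dbl_mul], fun A _ => ⟨fun h => ?_, ?_⟩⟩
  · obtain ⟨c, hc⟩ := exists_eq_smul_one_of_Dbl_eq_one h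
    exact eq_zero_of_hatRep_eq_smul_one hc
  · rintro rfl
    rw [hatRep_zero, Dbl_one]
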